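/- arXiv:2502.04195 — 8 statements merged into one kernel-verified Lean document; each statement's English description precedes it below -/
import Mathlib

section
/- Let C1 = C(G1,c1,A1,b1) and C2 = C(G2,c2,A2,b2) be constrained zonotopes in ℝ^n, where G1 ∈ ℝ^{n×s1}, G2 ∈ ℝ^{n×s2}, A1 ∈ ℝ^{q1×s1}, A2 ∈ ℝ^{q2×s2}. Then their Minkowski sum {z + w : z ∈ C1, w ∈ C2} equals the constrained zonotope C([G1 G2], c1 + c2, blockdiag(A1,A2), [b1; b2]), i.e. the constrained zonotope in ℝ^n with generator matrix the horizontal concatenation [G1 G2] ∈ ℝ^{n×(s1+s2)}, center c1 + c2, constraint matrix the block-diagonal matrix with blocks A1 and A2, and constraint vector obtained by stacking b1 over b2. -/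
/-- The constrained zonotope `C(G,c,A,b) = {x : ∃ ζ, x = Gζ + c, ‖ζ‖_∞ ≤ 1, Aζ = b}`. -/
def constrainedZonotope {ν σ κ : Type*} [Fintype σ]
    (G : Matrix ν σ ℝ) (c : ν → ℝ) (A : Matrix κ σ ℝ) (b : κ → ℝ) : Set (ν → ℝ) :=
  {x | ∃ ζ : σ → ℝ, (∀ i, |ζ i| ≤ 1) ∧ A.mulVec ζ = b ∧ x = G.mulVec ζ + c}

open Matrix Pointwise

theorem Matrix.fromBlocks_zero_zero_mulVec_sumElim {l m n o R : Type*} [Fintype l] [Fintype m]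
    [NonUnitalNonAssocSemiring R] (A : Matrix n l R) (D : Matrix o m R) (x : l → R) (y : m → R) :
    fromBlocks A 0 0 D *ᵥ Sum.elim x y = Sum.elim (A *ᵥ x) (D *ᵥ y) := by
  simp [fromBlocks_mulVec]

theorem exists_sumElim {α β γ : Type*} {p : (α ⊕ β → γ) → Prop} :
    (∃ f, p f) ↔ ∃ f g, p (Sum.elim f g) :=
  ⟨fun ⟨f, hf⟩ ↦ ⟨f ∘ .inl, f ∘ .inr, by simpa using hf⟩, fun ⟨f, g, h⟩ ↦ ⟨_, h⟩⟩

theorem constrainedZonotope_fromCols_fromBlocks {ν σ₁ σ₂ κ₁ κ₂ : Type*}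
    [Fintype σ₁] [Fintype σ₂] (G₁ : Matrix ν σ₁ ℝ) (c₁ : ν → ℝ)
    (A₁ : Matrix κ₁ σ₁ ℝ) (b₁ : κ₁ → ℝ) (G₂ : Matrix ν σ₂ ℝ) (c₂ : ν → ℝ)
    (A₂ : Matrix κ₂ σ₂ ℝ) (b₂ : κ₂ → ℝ) :
    constrainedZonotope (fromCols G₁ G₂) (c₁ + c₂) (fromBlocks A₁ 0 0 A₂) (Sum.elim b₁ b₂) =
      constrainedZonotope G₁ c₁ A₁ b₁ + constrainedZonotope G₂ c₂ A₂ b₂ := by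
  ext x
  simp only [constrainedZonotope, Set.mem_add, Set.mem_ofPred_eq, exists_sumElim,
    Sum.forall, Sum.elim_inl, Sum.elim_inr, fromBlocks_zero_zero_mulVec_sumElim,
    Sum.elim_eq_iff, fromCols_mulVec_sumElim]
  constructor
  · rintro ⟨ζ₁, ζ₂, ⟨hζ₁, hζ₂⟩, ⟨hA₁, hA₂⟩, rfl⟩
    exact ⟨_, ⟨ζ₁, hζ₁, hA₁, rfl⟩, _, ⟨ζ₂, hζ₂, hA₂, rfl⟩, by abel⟩
  · rintro ⟨_, ⟨ζ₁, hζ₁, hA₁, rfl⟩, _, ⟨ζ₂, hζ₂, hA₂, rfl⟩, rfl⟩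
    exact ⟨ζ₁, ζ₂, ⟨hζ₁, hζ₂⟩, ⟨hA₁, hA₂⟩, by abel⟩

/-- The Minkowski sum of two constrained zonotopes `C(G₁,c₁,A₁,b₁)` and `C(G₂,c₂,A₂,b₂)`
is the constrained zonotope with generator matrix `[G₁ G₂]`, center `c₁ + c₂`,
constraint matrix `blockdiag(A₁, A₂)` and constraint vector `[b₁; b₂]`. -/
theorem minkowski_sum_constrainedZonotope
    {n s₁ s₂ q₁ q₂ : ℕ}
    (G₁ : Matrix (Fin n) (Fin s₁) ℝ) (c₁ : Fin n → ℝ)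
    (A₁ : Matrix (Fin q₁) (Fin s₁) ℝ) (b₁ : Fin q₁ → ℝ)
    (G₂ : Matrix (Fin n) (Fin s₂) ℝ) (c₂ : Fin n → ℝ)
    (A₂ : Matrix (Fin q₂) (Fin s₂) ℝ) (b₂ : Fin q₂ → ℝ) :
    {x : Fin n → ℝ | ∃ z ∈ constrainedZonotope G₁ c₁ A₁ b₁,
        ∃ w ∈ constrainedZonotope G₂ c₂ A₂ b₂, x = z + w}
      = constrainedZonotope (Matrix.fromCols G₁ G₂) (c₁ + c₂)
          (Matrix.fromBlocks A₁ 0 0 A₂) (Sum.elim b₁ b₂) := by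
  rw [constrainedZonotope_fromCols_fromBlocks]
  ext x
  simp only [Set.mem_ofPred_eq, Set.mem_add, eq_comm]
end

section
/- Let C1 = C(G1,c1,A1,b1) and C2 = C(G2,c2,A2,b2) be constrained zonotopes in ℝ^n with G_i ∈ ℝ^{n×s_i}, A_i ∈ ℝ^{q_i×s_i}, b_i ∈ ℝ^{q_i}, i = 1,2. Suppose there exist matrices Γ ∈ ℝ^{s2×s1}, L ∈ ℝ^{s2}, P ∈ ℝ^{q2×q1} such that: c2 − c1 = G2 L, G1 = G2 Γ, P A1 = A2 Γ, P b1 = b2 + A2 L, and for every row index j, Σ_k |Γ_{jk}| + |L_j| ≤ 1. Then C1 ⊆ C2. -/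
lemma abs_mulVec_apply_le_sum_abs {ι σ : Type*} [Fintype σ] (M : Matrix ι σ ℝ) {ζ : σ → ℝ}
    (hζ : ∀ k, |ζ k| ≤ 1) (j : ι) : |M.mulVec ζ j| ≤ ∑ k, |M j k| :=
  calc |M.mulVec ζ j| = |∑ k, M j k * ζ k| := rfl
    _ ≤ ∑ k, |M j k * ζ k| := Finset.abs_sum_le_sum_abs _ _
    _ ≤ ∑ k, |M j k| := Finset.sum_le_sum fun k _ => by
        rw [abs_mul]
        exact mul_le_of_le_one_right (abs_nonneg _) (hζ k)

lemma abs_mulVec_sub_apply_le_one {ι σ : Type*} [Fintype σ] {Γ : Matrix ι σ ℝ} {L : ι → ℝ}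
    (hrow : ∀ j, (∑ k, |Γ j k|) + |L j| ≤ 1) {ζ : σ → ℝ} (hζ : ∀ k, |ζ k| ≤ 1) (j : ι) :
    |(Γ.mulVec ζ - L) j| ≤ 1 :=
  calc |(Γ.mulVec ζ - L) j| ≤ |Γ.mulVec ζ j| + |L j| := abs_sub _ _
    _ ≤ (∑ k, |Γ j k|) + |L j| := add_le_add_left (abs_mulVec_apply_le_sum_abs Γ hζ j) _
    _ ≤ 1 := hrow j

/-- Sufficient conditions (via matrices `Γ`, `L`, `P`) for the inclusion of the
constrained zonotope `C(G₁,c₁,A₁,b₁)` in the constrained zonotope `C(G₂,c₂,A₂,b₂)`. -/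
theorem constrainedZonotope_subset
    {n s₁ s₂ q₁ q₂ : ℕ}
    (G₁ : Matrix (Fin n) (Fin s₁) ℝ) (c₁ : Fin n → ℝ)
    (A₁ : Matrix (Fin q₁) (Fin s₁) ℝ) (b₁ : Fin q₁ → ℝ)
    (G₂ : Matrix (Fin n) (Fin s₂) ℝ) (c₂ : Fin n → ℝ)
    (A₂ : Matrix (Fin q₂) (Fin s₂) ℝ) (b₂ : Fin q₂ → ℝ)
    (Γ : Matrix (Fin s₂) (Fin s₁) ℝ) (L : Fin s₂ → ℝ) (P : Matrix (Fin q₂) (Fin q₁) ℝ)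
    (hc : c₂ - c₁ = G₂.mulVec L)
    (hG : G₁ = G₂ * Γ)
    (hA : P * A₁ = A₂ * Γ)
    (hb : P.mulVec b₁ = b₂ + A₂.mulVec L)
    (hrow : ∀ j, (∑ k, |Γ j k|) + |L j| ≤ 1) :
    constrainedZonotope G₁ c₁ A₁ b₁ ⊆ constrainedZonotope G₂ c₂ A₂ b₂ := by
  rintro x ⟨ζ, hζ, hAζ, rfl⟩
  refine ⟨Γ.mulVec ζ - L, abs_mulVec_sub_apply_le_one hrow hζ, ?_, ?_⟩
  · rw [Matrix.mulVec_sub, Matrix.mulVec_mulVec, ← hA, ← Matrix.mulVec_mulVec, hAζ, hb]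
    abel
  · rw [Matrix.mulVec_sub, Matrix.mulVec_mulVec, ← hG, ← hc]
    abel
end

section
/- Let K1 and K2 be constrained matrix zonotopes of the same dimension (n,p): K1 has generators G1_1,…,G1_{s1} ∈ ℝ^{n×p}, center C1 ∈ ℝ^{n×p}, constraint matrices A1_1,…,A1_{s1} ∈ ℝ^{m1×p} and constraint offset B1 ∈ ℝ^{m1×p}; K2 has generators G2_1,…,G2_{s2} ∈ ℝ^{n×p}, center C2 ∈ ℝ^{n×p}, constraint matrices A2_1,…,A2_{s2} ∈ ℝ^{m2×p} and constraint offset B2 ∈ ℝ^{m2×p}. Then the intersection K1 ∩ K2 equals the constrained matrix zonotope of dimension (n,p) with s1 + s2 generators given by Ĝ_i = G1_i for i ≤ s1 and Ĝ_i = 0 for s1 < i ≤ s1+s2, center C1, constraint matrices Â_i ∈ ℝ^{(m1+m2+n)×p} given by vertically stacking (A1_i, 0, G1_i) for i ≤ s1 and (0, A2_{i−s1}, −G2_{i−s1}) for i > s1, and constraint offset obtained by vertically stacking (B1, B2, C2 − C1). -/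
/-!
A point of `K₁ ∩ K₂` comes with a factor vector `ζ₁` for `K₁` and `ζ₂` for `K₂`; concatenated
they form one factor vector on `s₁ + s₂` generators. The requirement that both parametrisations
give the same point, `Σ ζ₁ᵢ G₁ᵢ + C₁ = Σ ζ₂ᵢ G₂ᵢ + C₂`, is the linear constraint
`Σ ζ₁ᵢ G₁ᵢ - Σ ζ₂ᵢ G₂ᵢ = C₂ - C₁`, which is the third block row of the stacked constraint.
-/

open Matrix

/-- The constrained matrix zonotope
`K((Gᵢ),C,(Aᵢ),B) = {X : ∃ ζ, X = Σ ζᵢ Gᵢ + C, ‖ζ‖_∞ ≤ 1, Σ ζᵢ Aᵢ = B}`. -/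
def constrainedMatrixZonotope {ν π μ ρ σ : Type*} [Fintype σ]
    (G : σ → Matrix ν π ℝ) (C : Matrix ν π ℝ)
    (A : σ → Matrix μ ρ ℝ) (B : Matrix μ ρ ℝ) : Set (Matrix ν π ℝ) :=
  {X | ∃ ζ : σ → ℝ, (∀ i, |ζ i| ≤ 1) ∧ (∑ i, ζ i • A i) = B ∧ X = (∑ i, ζ i • G i) + C}

namespace Matrix

variable {R m₁ m₂ n : Type*}

theorem fromRows_add [Add R] (A₁ B₁ : Matrix m₁ n R) (A₂ B₂ : Matrix m₂ n R) :
    fromRows A₁ A₂ + fromRows B₁ B₂ = fromRows (A₁ + B₁) (A₂ + B₂) := by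
  ext (i | i) j <;> rfl

theorem sum_smul_fromRows [Semiring R] {ι : Type*} [Fintype ι] (c : ι → R)
    (A₁ : ι → Matrix m₁ n R) (A₂ : ι → Matrix m₂ n R) :
    ∑ i, c i • fromRows (A₁ i) (A₂ i) = fromRows (∑ i, c i • A₁ i) (∑ i, c i • A₂ i) := by
  ext (k | k) j <;> simp [sum_apply]

end Matrix

theorem eq_add_and_eq_add_iff {M : Type*} [AddCommGroup M] {x a b c d : M} :
    x = a + c ∧ x = b + d ↔ x = a + c ∧ a - b = d - c := by
  constructor <;> rintro ⟨rfl, h⟩ <;> refine ⟨rfl, ?_⟩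
  · rw [sub_eq_sub_iff_add_eq_add, h, add_comm]
  · rwa [sub_eq_sub_iff_add_eq_add, add_comm d] at h

theorem mem_constrainedMatrixZonotope_sumElim_iff {ν π μ ρ σ₁ σ₂ : Type*} [Fintype σ₁]
    [Fintype σ₂] (G₁ : σ₁ → Matrix ν π ℝ) (G₂ : σ₂ → Matrix ν π ℝ) (C : Matrix ν π ℝ)
    (A₁ : σ₁ → Matrix μ ρ ℝ) (A₂ : σ₂ → Matrix μ ρ ℝ) (B : Matrix μ ρ ℝ) (X : Matrix ν π ℝ) :
    X ∈ constrainedMatrixZonotope (Sum.elim G₁ G₂) C (Sum.elim A₁ A₂) B ↔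
      ∃ ζ₁ : σ₁ → ℝ, ∃ ζ₂ : σ₂ → ℝ, (∀ i, |ζ₁ i| ≤ 1) ∧ (∀ i, |ζ₂ i| ≤ 1) ∧
        (∑ i, ζ₁ i • A₁ i) + (∑ i, ζ₂ i • A₂ i) = B ∧
        X = (∑ i, ζ₁ i • G₁ i) + (∑ i, ζ₂ i • G₂ i) + C := by
  simp only [constrainedMatrixZonotope, Set.mem_ofPred_eq, Fintype.sum_sum_type, Sum.forall,
    Sum.elim_inl, Sum.elim_inr, add_assoc]
  constructor
  · rintro ⟨ζ, ⟨h₁, h₂⟩, hA, hX⟩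
    exact ⟨ζ ∘ Sum.inl, ζ ∘ Sum.inr, h₁, h₂, hA, hX⟩
  · rintro ⟨ζ₁, ζ₂, h₁, h₂, hA, hX⟩
    exact ⟨Sum.elim ζ₁ ζ₂, ⟨h₁, h₂⟩, hA, hX⟩

/-- The intersection of two constrained matrix zonotopes of the same dimension `(n,p)`
is a constrained matrix zonotope with `s₁ + s₂` generators: the generators are those of
the first one padded with zeros, the center is `C₁`, the constraint matrices are the
vertical stackings `(A₁ᵢ, 0, G₁ᵢ)` resp. `(0, A₂ᵢ, −G₂ᵢ)`, and the constraint offset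
is the vertical stacking `(B₁, B₂, C₂ − C₁)`. -/
theorem constrainedMatrixZonotope_inter
    {n p s₁ s₂ m₁ m₂ : ℕ}
    (G₁ : Fin s₁ → Matrix (Fin n) (Fin p) ℝ) (C₁ : Matrix (Fin n) (Fin p) ℝ)
    (A₁ : Fin s₁ → Matrix (Fin m₁) (Fin p) ℝ) (B₁ : Matrix (Fin m₁) (Fin p) ℝ)
    (G₂ : Fin s₂ → Matrix (Fin n) (Fin p) ℝ) (C₂ : Matrix (Fin n) (Fin p) ℝ)
    (A₂ : Fin s₂ → Matrix (Fin m₂) (Fin p) ℝ) (B₂ : Matrix (Fin m₂) (Fin p) ℝ) :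
    constrainedMatrixZonotope G₁ C₁ A₁ B₁ ∩ constrainedMatrixZonotope G₂ C₂ A₂ B₂
      = constrainedMatrixZonotope
          (Sum.elim G₁ (fun _ => (0 : Matrix (Fin n) (Fin p) ℝ)))
          C₁
          (Sum.elim
            (fun i => Matrix.fromRows (A₁ i) (Matrix.fromRows (0 : Matrix (Fin m₂) (Fin p) ℝ) (G₁ i)))
            (fun i => Matrix.fromRows (0 : Matrix (Fin m₁) (Fin p) ℝ)
              (Matrix.fromRows (A₂ i) (-(G₂ i)))))
          (Matrix.fromRows B₁ (Matrix.fromRows B₂ (C₂ - C₁))) := by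
  ext X
  rw [Set.mem_inter_iff, mem_constrainedMatrixZonotope_sumElim_iff]
  simp only [constrainedMatrixZonotope, Set.mem_ofPred_eq, sum_smul_fromRows, fromRows_add,
    fromRows_ext_iff, smul_zero, smul_neg, Finset.sum_const_zero, Finset.sum_neg_distrib,
    add_zero, zero_add, ← sub_eq_add_neg]
  constructor
  · rintro ⟨⟨ζ₁, h₁, hA₁, hX₁⟩, ⟨ζ₂, h₂, hA₂, hX₂⟩⟩
    exact ⟨ζ₁, ζ₂, h₁, h₂, ⟨hA₁, hA₂, (eq_add_and_eq_add_iff.mp ⟨hX₁, hX₂⟩).2⟩, hX₁⟩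
  · rintro ⟨ζ₁, ζ₂, h₁, h₂, ⟨hA₁, hA₂, hG⟩, hX⟩
    exact ⟨⟨ζ₁, h₁, hA₁, hX⟩, ⟨ζ₂, h₂, hA₂, (eq_add_and_eq_add_iff.mpr ⟨hX, hG⟩).2⟩⟩
end

section
/- Let K be a constrained matrix zonotope of dimension (n,p) with generators G_1,…,G_s ∈ ℝ^{n×p}, center C ∈ ℝ^{n×p}, constraint matrices A_1,…,A_s ∈ ℝ^{m×r} and constraint offset B ∈ ℝ^{m×r}, and let v ∈ ℝ^p be any vector. Then the image set {X v : X ∈ K} equals the constrained zonotope in ℝ^n with generator matrix [G_1 v ⋯ G_s v] ∈ ℝ^{n×s}, center C v, constraint matrix [vec(A_1) ⋯ vec(A_s)] ∈ ℝ^{mr×s} (the columnwise vectorizations of A_1,…,A_s) and constraint vector vec(B). -/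
/-! Both sets are parametrised by the same coefficient vector `ζ`, since both conditions on it
are linear: right multiplication by `v` sends `Σ ζᵢ Gᵢ + C` to `Σ ζᵢ (Gᵢ v) + C v`, and
`Σ ζᵢ Aᵢ = B` is the same equation as `Σ ζᵢ vec(Aᵢ) = vec(B)` between the vectors of entries. -/

namespace Matrix

variable {ν μ ρ π σ R : Type*} [Fintype σ] [CommSemiring R]

theorem of_mulVec_eq_sum_smul (w : σ → ν → R) (ζ : σ → R) :
    (of fun j i => w i j) *ᵥ ζ = ∑ i, ζ i • w i := by
  simp only [mulVec_eq_sum, op_smul_eq_smul]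
  rfl

theorem sum_smul_add_mulVec [Fintype π] (G : σ → Matrix ν π R) (C : Matrix ν π R)
    (ζ : σ → R) (v : π → R) :
    ((∑ i, ζ i • G i) + C) *ᵥ v = (of fun j i => (G i *ᵥ v) j) *ᵥ ζ + C *ᵥ v := by
  rw [add_mulVec, sum_mulVec, of_mulVec_eq_sum_smul (fun i => G i *ᵥ v)]
  simp only [smul_mulVec]

theorem sum_smul_eq_iff_mulVec_eq (A : σ → Matrix μ ρ R) (B : Matrix μ ρ R) (ζ : σ → R) :
    ∑ i, ζ i • A i = B ↔
      (of fun (kl : μ × ρ) i => A i kl.1 kl.2) *ᵥ ζ = fun kl => B kl.1 kl.2 := by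
  rw [of_mulVec_eq_sum_smul (fun i (kl : μ × ρ) => A i kl.1 kl.2), funext_iff, Prod.forall,
    ← Matrix.ext_iff]
  simp only [Finset.sum_apply, Pi.smul_apply, sum_apply, smul_apply]

end Matrix

/-- Right multiplication of a constrained matrix zonotope by a vector `v` yields the
constrained zonotope with generator matrix `[G₁v ⋯ G_s v]`, center `Cv`, constraint
matrix `[vec(A₁) ⋯ vec(A_s)]` (columnwise vectorizations, here indexed by pairs `(i,j)`
of row and column indices) and constraint vector `vec(B)`. -/
theorem constrainedMatrixZonotope_mulVec
    {n p m r s : ℕ}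
    (G : Fin s → Matrix (Fin n) (Fin p) ℝ) (C : Matrix (Fin n) (Fin p) ℝ)
    (A : Fin s → Matrix (Fin m) (Fin r) ℝ) (B : Matrix (Fin m) (Fin r) ℝ)
    (v : Fin p → ℝ) :
    {y : Fin n → ℝ | ∃ X ∈ constrainedMatrixZonotope G C A B, y = X.mulVec v}
      = constrainedZonotope
          (Matrix.of fun j (i : Fin s) => (G i).mulVec v j)
          (C.mulVec v)
          (Matrix.of fun (kl : Fin m × Fin r) (i : Fin s) => A i kl.1 kl.2)
          (fun kl : Fin m × Fin r => B kl.1 kl.2) := by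
  ext y
  simp only [constrainedMatrixZonotope, constrainedZonotope, Set.mem_ofPred_eq]
  constructor
  · rintro ⟨X, ⟨ζ, hζ, hA, rfl⟩, rfl⟩
    exact ⟨ζ, hζ, (Matrix.sum_smul_eq_iff_mulVec_eq A B ζ).1 hA,
      Matrix.sum_smul_add_mulVec G C ζ v⟩
  · rintro ⟨ζ, hζ, hA, rfl⟩
    exact ⟨_, ⟨ζ, hζ, (Matrix.sum_smul_eq_iff_mulVec_eq A B ζ).2 hA, rfl⟩,
      (Matrix.sum_smul_add_mulVec G C ζ v).symm⟩
end

section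
/- Let M_prior ⊆ ℝ^{n×(n+m)} and M_w ⊆ ℝ^{n×T} be arbitrary sets (in the paper, constrained matrix zonotopes encoding prior model knowledge and the T-fold disturbance set, respectively). Let X_0 ∈ ℝ^{n×T}, X_1 ∈ ℝ^{n×T}, U_0 ∈ ℝ^{m×T} be data matrices and D_0 = [X_0; U_0] ∈ ℝ^{(n+m)×T} their vertical stacking. Suppose G_K ∈ ℝ^{T×n} satisfies X_0 G_K = I_n, and set K = U_0 G_K ∈ ℝ^{m×n}. Define the consistency set Σ = {θ = [A B] ∈ M_prior : ∃ W ∈ M_w, X_1 = θ D_0 + W}. Then the set of consistent closed-loop matrices {A + B K : [A B] ∈ Σ} equals {(X_1 − W) G_K : W ∈ M_w and ∃ θ ∈ M_prior with W = X_1 − θ D_0}. -/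
/-! Right-multiplying `θ D₀` by `G_K` turns it into the closed-loop matrix: splitting `θ` into
column blocks, `θ D₀ G_K = A X₀ G_K + B U₀ G_K = A + B K`. For a consistent pair `(θ, W)` we
have `θ D₀ = X₁ − W`, so both sets collect the same matrices `θ D₀ G_K`, indexed by the same
pairs `(θ, W)`. -/

namespace Matrix

variable {R ι κ n₁ n₂ : Type*} [Fintype n₁] [Fintype n₂]

theorem mul_fromRows_eq_add [Semiring R] (θ : Matrix ι (n₁ ⊕ n₂) R)
    (X : Matrix n₁ κ R) (U : Matrix n₂ κ R) :
    θ * fromRows X U = θ.submatrix id Sum.inl * X + θ.submatrix id Sum.inr * U := by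
  conv_lhs => rw [← fromCols_toCols θ]
  exact fromCols_mul_fromRows θ.toCols₁ θ.toCols₂ X U

theorem mul_fromRows_mul_of_mul_eq_one [Semiring R] [Fintype κ] [DecidableEq n₁]
    (θ : Matrix ι (n₁ ⊕ n₂) R) (X : Matrix n₁ κ R) (U : Matrix n₂ κ R) {G : Matrix κ n₁ R}
    (hXG : X * G = 1) :
    θ * fromRows X U * G = θ.submatrix id Sum.inl + θ.submatrix id Sum.inr * (U * G) := by
  rw [mul_fromRows_eq_add, Matrix.add_mul, Matrix.mul_assoc, Matrix.mul_assoc, hXG,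
    Matrix.mul_one]

end Matrix

/-- Let `M_prior` and `M_w` be arbitrary sets of parameter matrices `θ = [A B]` and of
disturbance matrices, let `D₀ = [X₀; U₀]`, let `G_K` satisfy `X₀ G_K = I`, and let
`K = U₀ G_K`.  For the consistency set
`Σ = {θ = [A B] ∈ M_prior : ∃ W ∈ M_w, X₁ = θD₀ + W}`, the set of consistent closed-loop
matrices `{A + BK : [A B] ∈ Σ}` equals
`{(X₁ − W)G_K : W ∈ M_w, ∃ θ ∈ M_prior, W = X₁ − θD₀}`.
Here `θ = [A B]` is encoded with column index type `Fin n ⊕ Fin m`, so that `A` is the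
submatrix of the first `n` columns and `B` the submatrix of the last `m` columns. -/
theorem closedLoop_set_representation
    {n m T : ℕ}
    (Mprior : Set (Matrix (Fin n) (Fin n ⊕ Fin m) ℝ))
    (Mw : Set (Matrix (Fin n) (Fin T) ℝ))
    (X₀ X₁ : Matrix (Fin n) (Fin T) ℝ) (U₀ : Matrix (Fin m) (Fin T) ℝ)
    (G_K : Matrix (Fin T) (Fin n) ℝ) (K : Matrix (Fin m) (Fin n) ℝ)
    (D₀ : Matrix (Fin n ⊕ Fin m) (Fin T) ℝ)
    (hD₀ : D₀ = Matrix.fromRows X₀ U₀)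
    (hinv : X₀ * G_K = 1)
    (hK : K = U₀ * G_K) :
    {Ak : Matrix (Fin n) (Fin n) ℝ |
        ∃ θ ∈ {θ ∈ Mprior | ∃ W ∈ Mw, X₁ = θ * D₀ + W},
          Ak = θ.submatrix id Sum.inl + θ.submatrix id Sum.inr * K}
      = {Ak : Matrix (Fin n) (Fin n) ℝ |
          ∃ W ∈ Mw, (∃ θ ∈ Mprior, W = X₁ - θ * D₀) ∧ Ak = (X₁ - W) * G_K} := by
  have closedLoop_eq (θ : Matrix (Fin n) (Fin n ⊕ Fin m) ℝ) :
      θ.submatrix id Sum.inl + θ.submatrix id Sum.inr * K = θ * D₀ * G_K := by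
    rw [hD₀, hK, Matrix.mul_fromRows_mul_of_mul_eq_one θ X₀ U₀ hinv]
  have consistent_iff {θ : Matrix (Fin n) (Fin n ⊕ Fin m) ℝ} {W : Matrix (Fin n) (Fin T) ℝ} :
      X₁ = θ * D₀ + W ↔ W = X₁ - θ * D₀ := by
    rw [eq_sub_iff_add_eq, add_comm, eq_comm]
  ext Ak
  constructor
  · rintro ⟨θ, ⟨hθ, W, hW, hX₁⟩, rfl⟩
    refine ⟨W, hW, ⟨θ, hθ, consistent_iff.mp hX₁⟩, ?_⟩
    rw [closedLoop_eq, consistent_iff.mp hX₁, sub_sub_cancel]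
  · rintro ⟨W, hW, ⟨θ, hθ, rfl⟩, rfl⟩
    exact ⟨θ, ⟨hθ, _, hW, consistent_iff.mpr rfl⟩, by rw [closedLoop_eq, sub_sub_cancel]⟩
end

section
/- Let K be a constrained matrix zonotope of dimension (n,n) with generators G_1,…,G_s ∈ ℝ^{n×n}, center C ∈ ℝ^{n×n}, constraint matrices A_1,…,A_s ∈ ℝ^{m×r} and constraint offset B ∈ ℝ^{m×r}; let Z_w = C(G_h, c_h, A_h, b_h) be a constrained zonotope in ℝ^n; and let the safe set be the constrained zonotope C_x = C(G_x, c_x, A_x, b_x) with G_x ∈ ℝ^{n×sx}, A_x ∈ ℝ^{q×sx}. Fix λ > 0. For each x ∈ C_x, let C_next(x) denote the constrained zonotope in ℝ^n with generator matrix G_cl(x) = [G_1 x ⋯ G_s x G_h], center c_cl(x) = C x + c_h, constraint matrix A_cl = blockdiag([vec(A_1) ⋯ vec(A_s)], A_h) and constraint vector b_cl = [vec(B); b_h]. Suppose that for every x ∈ C_x there exist matrices Γ ∈ ℝ^{sx×(s+sw)}, L ∈ ℝ^{sx}, P ∈ ℝ^{q×(mr+nw)} such that c_x − c_cl(x) =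 λ G_x L, G_cl(x) = λ G_x Γ, P A_cl = A_x Γ, P b_cl = λ b_x + A_x L, and for every row index j, Σ_k |Γ_{jk}| + |L_j| ≤ 1. Then for every x ∈ C_x, every M ∈ K and every w ∈ Z_w, the next state M x + w belongs to the λ-scaled safe set C(λ G_x, c_x, A_x, λ b_x), i.e. there exists ζ with ‖ζ‖_∞ ≤ 1, A_x ζ = λ b_x and M x + w = λ G_x ζ + c_x. -/
/-! The certificate `(Γ, L, P)` maps a generator vector `ξ` of the next-state set `C_next(x)` to
`Γ ξ - L`, a generator vector of the `λ`-scaled safe set: the row bound keeps it in the unit box,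
and the equations on centres, generators and constraints transport the representation.
The next state `Mx + w` lies in `C_next(x)` because the image of a constrained matrix zonotope
under `M ↦ Mx` has generators `Gᵢx`, and `C_next(x)` is its Minkowski sum with `Z_w`. -/

open Matrix

section

variable {ν π σ σ₁ σ₂ κ₁ κ₂ μ ρ : Type*}

theorem abs_mulVec_sub_le_one [Fintype σ₁] {Γ : Matrix σ₂ σ₁ ℝ} {L : σ₂ → ℝ} {ξ : σ₁ → ℝ}
    (hξ : ∀ k, |ξ k| ≤ 1) (hΓL : ∀ j, (∑ k, |Γ j k|) + |L j| ≤ 1) (j : σ₂) :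
    |(Γ *ᵥ ξ - L) j| ≤ 1 :=
  calc |(Γ *ᵥ ξ - L) j| ≤ |(Γ *ᵥ ξ) j| + |L j| := abs_sub _ _
    _ ≤ (∑ k, |Γ j k|) + |L j| := by
        gcongr
        calc |(Γ *ᵥ ξ) j| = |∑ k, Γ j k * ξ k| := rfl
          _ ≤ ∑ k, |Γ j k * ξ k| := Finset.abs_sum_le_sum_abs _ _
          _ ≤ ∑ k, |Γ j k| := Finset.sum_le_sum fun k _ => by
              rw [abs_mul]
              exact mul_le_of_le_one_right (abs_nonneg _) (hξ k)
    _ ≤ 1 := hΓL j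

theorem constrainedZonotope_subset_of_certificate [Fintype σ₁] [Fintype σ₂] [Fintype κ₁]
    {G₁ : Matrix ν σ₁ ℝ} {c₁ : ν → ℝ} {A₁ : Matrix κ₁ σ₁ ℝ} {b₁ : κ₁ → ℝ}
    {G₂ : Matrix ν σ₂ ℝ} {c₂ : ν → ℝ} {A₂ : Matrix κ₂ σ₂ ℝ} {b₂ : κ₂ → ℝ}
    (Γ : Matrix σ₂ σ₁ ℝ) (L : σ₂ → ℝ) (P : Matrix κ₂ κ₁ ℝ)
    (hc : c₂ - c₁ = G₂ *ᵥ L) (hG : G₁ = G₂ * Γ) (hA : P * A₁ = A₂ * Γ)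
    (hb : P *ᵥ b₁ = b₂ + A₂ *ᵥ L) (hΓL : ∀ j, (∑ k, |Γ j k|) + |L j| ≤ 1) :
    constrainedZonotope G₁ c₁ A₁ b₁ ⊆ constrainedZonotope G₂ c₂ A₂ b₂ := by
  rintro _ ⟨ξ, hξ, hAξ, rfl⟩
  refine ⟨Γ *ᵥ ξ - L, abs_mulVec_sub_le_one hξ hΓL, ?_, ?_⟩
  · rw [mulVec_sub, mulVec_mulVec, ← hA, ← mulVec_mulVec, hAξ, hb, add_sub_cancel_right]
  · rw [mulVec_sub, mulVec_mulVec, ← hG, ← hc]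
    abel

theorem add_mem_constrainedZonotope [Fintype σ₁] [Fintype σ₂]
    {G₁ : Matrix ν σ₁ ℝ} {c₁ : ν → ℝ} {A₁ : Matrix κ₁ σ₁ ℝ} {b₁ : κ₁ → ℝ}
    {G₂ : Matrix ν σ₂ ℝ} {c₂ : ν → ℝ} {A₂ : Matrix κ₂ σ₂ ℝ} {b₂ : κ₂ → ℝ} {y₁ y₂ : ν → ℝ}
    (hy₁ : y₁ ∈ constrainedZonotope G₁ c₁ A₁ b₁) (hy₂ : y₂ ∈ constrainedZonotope G₂ c₂ A₂ b₂) :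
    y₁ + y₂ ∈ constrainedZonotope (fromCols G₁ G₂) (c₁ + c₂) (fromBlocks A₁ 0 0 A₂)
      (Sum.elim b₁ b₂) := by
  obtain ⟨ξ₁, hξ₁, hAξ₁, rfl⟩ := hy₁
  obtain ⟨ξ₂, hξ₂, hAξ₂, rfl⟩ := hy₂
  refine ⟨Sum.elim ξ₁ ξ₂, Sum.rec hξ₁ hξ₂, ?_, ?_⟩
  · simp [fromBlocks_mulVec, Function.comp_def, hAξ₁, hAξ₂]
  · rw [fromCols_mulVec_sumElim]
    abel

theorem mulVec_mem_constrainedZonotope [Fintype π] [Fintype σ]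
    {G : σ → Matrix ν π ℝ} {C : Matrix ν π ℝ} {A : σ → Matrix μ ρ ℝ} {B : Matrix μ ρ ℝ}
    {M : Matrix ν π ℝ} (hM : M ∈ constrainedMatrixZonotope G C A B) (x : π → ℝ) :
    M *ᵥ x ∈ constrainedZonotope (of fun j i => (G i *ᵥ x) j) (C *ᵥ x)
      (of fun (kl : μ × ρ) i => A i kl.1 kl.2) (fun kl => B kl.1 kl.2) := by
  obtain ⟨ζ, hζ, hAζ, rfl⟩ := hM
  refine ⟨ζ, hζ, ?_, ?_⟩
  · ext ⟨k, l⟩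
    simp [← hAζ, mulVec, dotProduct, Matrix.sum_apply, mul_comm]
  · rw [add_mulVec, sum_mulVec]
    ext j
    simp [smul_mulVec, mulVec, dotProduct, mul_comm]

end

theorem safe_control_constrainedZonotope_general
    {n m r s sw nw sx q : ℕ}
    (G : Fin s → Matrix (Fin n) (Fin n) ℝ) (C : Matrix (Fin n) (Fin n) ℝ)
    (A : Fin s → Matrix (Fin m) (Fin r) ℝ) (B : Matrix (Fin m) (Fin r) ℝ)
    (Gh : Matrix (Fin n) (Fin sw) ℝ) (ch : Fin n → ℝ)
    (Ah : Matrix (Fin nw) (Fin sw) ℝ) (bh : Fin nw → ℝ)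
    (Gx : Matrix (Fin n) (Fin sx) ℝ) (cx : Fin n → ℝ)
    (Ax : Matrix (Fin q) (Fin sx) ℝ) (bx : Fin q → ℝ)
    (lam : ℝ)
    (hinc : ∀ x ∈ constrainedZonotope Gx cx Ax bx,
      ∃ (Γ : Matrix (Fin sx) (Fin s ⊕ Fin sw) ℝ) (L : Fin sx → ℝ)
        (P : Matrix (Fin q) ((Fin m × Fin r) ⊕ Fin nw) ℝ),
        cx - (C.mulVec x + ch) = lam • Gx.mulVec L ∧
        Matrix.fromCols (Matrix.of fun j (i : Fin s) => (G i).mulVec x j) Gh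
          = lam • (Gx * Γ) ∧
        P * Matrix.fromBlocks
            (Matrix.of fun (kl : Fin m × Fin r) (i : Fin s) => A i kl.1 kl.2) 0 0 Ah
          = Ax * Γ ∧
        P.mulVec (Sum.elim (fun kl : Fin m × Fin r => B kl.1 kl.2) bh)
          = lam • bx + Ax.mulVec L ∧
        ∀ j, (∑ k, |Γ j k|) + |L j| ≤ 1) :
    ∀ x ∈ constrainedZonotope Gx cx Ax bx,
      ∀ M ∈ constrainedMatrixZonotope G C A B,
        ∀ w ∈ constrainedZonotope Gh ch Ah bh,
          ∃ ζ : Fin sx → ℝ, (∀ i, |ζ i| ≤ 1) ∧ Ax.mulVec ζ = lam • bx ∧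
            M.mulVec x + w = (lam • Gx).mulVec ζ + cx := by
  intro x hx M hM w hw
  obtain ⟨Γ, L, P, hc, hG, hA, hb, hΓL⟩ := hinc x hx
  refine constrainedZonotope_subset_of_certificate Γ L P ?_ ?_ hA hb hΓL
    (add_mem_constrainedZonotope (mulVec_mem_constrainedZonotope hM x) hw)
  · rwa [smul_mulVec]
  · rwa [smul_mul]

/-- Safe control via set inclusion: if, for every `x` in the constrained-zonotope safe
set `C_x = C(G_x,c_x,A_x,b_x)`, the next-state constrained zonotope
`C_next(x) = C([G₁x ⋯ G_s x  G_h], Cx + c_h, blockdiag([vec A₁ ⋯ vec A_s], A_h), [vec B; b_h])`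
satisfies the inclusion conditions of the `(Γ, L, P)` lemma with respect to the
`λ`-scaled safe set `C(λG_x, c_x, A_x, λb_x)`, then for every `x ∈ C_x`, every
closed-loop matrix `M` in the constrained matrix zonotope `K` and every disturbance
`w ∈ Z_w`, the next state `Mx + w` belongs to the `λ`-scaled safe set. -/
theorem safe_control_constrainedZonotope
    {n m r s sw nw sx q : ℕ}
    (G : Fin s → Matrix (Fin n) (Fin n) ℝ) (C : Matrix (Fin n) (Fin n) ℝ)
    (A : Fin s → Matrix (Fin m) (Fin r) ℝ) (B : Matrix (Fin m) (Fin r) ℝ)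
    (Gh : Matrix (Fin n) (Fin sw) ℝ) (ch : Fin n → ℝ)
    (Ah : Matrix (Fin nw) (Fin sw) ℝ) (bh : Fin nw → ℝ)
    (Gx : Matrix (Fin n) (Fin sx) ℝ) (cx : Fin n → ℝ)
    (Ax : Matrix (Fin q) (Fin sx) ℝ) (bx : Fin q → ℝ)
    (lam : ℝ) (hlam : 0 < lam)
    (hinc : ∀ x ∈ constrainedZonotope Gx cx Ax bx,
      ∃ (Γ : Matrix (Fin sx) (Fin s ⊕ Fin sw) ℝ) (L : Fin sx → ℝ)
        (P : Matrix (Fin q) ((Fin m × Fin r) ⊕ Fin nw) ℝ),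
        cx - (C.mulVec x + ch) = lam • Gx.mulVec L ∧
        Matrix.fromCols (Matrix.of fun j (i : Fin s) => (G i).mulVec x j) Gh
          = lam • (Gx * Γ) ∧
        P * Matrix.fromBlocks
            (Matrix.of fun (kl : Fin m × Fin r) (i : Fin s) => A i kl.1 kl.2) 0 0 Ah
          = Ax * Γ ∧
        P.mulVec (Sum.elim (fun kl : Fin m × Fin r => B kl.1 kl.2) bh)
          = lam • bx + Ax.mulVec L ∧
        ∀ j, (∑ k, |Γ j k|) + |L j| ≤ 1) :
    ∀ x ∈ constrainedZonotope Gx cx Ax bx,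
      ∀ M ∈ constrainedMatrixZonotope G C A B,
        ∀ w ∈ constrainedZonotope Gh ch Ah bh,
          ∃ ζ : Fin sx → ℝ, (∀ i, |ζ i| ≤ 1) ∧ Ax.mulVec ζ = lam • bx ∧
            M.mulVec x + w = (lam • Gx).mulVec ζ + cx :=
  safe_control_constrainedZonotope_general G C A B Gh ch Ah bh Gx cx Ax bx lam hinc
end

section
/- Let M ∈ ℝ^{n×n} be a closed-loop matrix, let the disturbance set be a constrained zonotope Z_w = C(G_h, c_h, A_h, b_h) ⊂ ℝ^n with G_h ∈ ℝ^{n×sw}, and let the safe set be the polytope P = {x ∈ ℝ^n : H_s x ≤ h_s} with H_s ∈ ℝ^{q×n}, h_s ∈ ℝ^q. Fix λ ∈ (0,1). Define y ∈ ℝ^q by y_j = Σ_{i=1}^{sw} |H_{s,j} G_{h,i}|, where H_{s,j} is the j-th row of H_s and G_{h,i} the i-th column of G_h. Suppose there exists an entrywise nonnegative matrix P̄ ∈ ℝ^{q×q} such that P̄ H_s = H_s M and P̄ h_s ≤ λ h_s − H_s c_h − y (entrywise). Then for every x with H_s x ≤ h_s and every w ∈ Z_w, the next state satisfies H_s (M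 x + w) ≤ λ h_s; that is, the polytope P is mapped into its λ-scaled version λP under the closed-loop dynamics for all admissible disturbances. -/
open Matrix

section

variable {R m n : Type*} [Fintype n]

theorem Matrix.mulVec_le_mulVec_of_nonneg [Semiring R] [PartialOrder R] [IsOrderedRing R]
    {A : Matrix m n R} (hA : ∀ i j, 0 ≤ A i j) {u v : n → R} (huv : u ≤ v) :
    A *ᵥ u ≤ A *ᵥ v :=
  fun i => dotProduct_le_dotProduct_of_nonneg_left huv (hA i)

theorem Matrix.mulVec_apply_le_sum_abs [Ring R] [LinearOrder R] [IsOrderedRing R]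
    (A : Matrix m n R) {ζ : n → R} (hζ : ∀ i, |ζ i| ≤ 1) (j : m) :
    (A *ᵥ ζ) j ≤ ∑ i, |A j i| :=
  Finset.sum_le_sum fun i _ =>
    calc A j i * ζ i ≤ |A j i * ζ i| := le_abs_self _
      _ = |A j i| * |ζ i| := abs_mul _ _
      _ ≤ |A j i| := mul_le_of_le_one_right (abs_nonneg _) (hζ i)

end

theorem mulVec_apply_le_of_mem_constrainedZonotope {μ ν σ κ : Type*} [Fintype ν] [Fintype σ]
    {G : Matrix ν σ ℝ} {c : ν → ℝ} {A : Matrix κ σ ℝ} {b : κ → ℝ} (H : Matrix μ ν ℝ)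
    {w : ν → ℝ} (hw : w ∈ constrainedZonotope G c A b) (j : μ) :
    (H *ᵥ w) j ≤ (H *ᵥ c) j + ∑ i, |(H * G) j i| := by
  obtain ⟨ζ, hζ, -, rfl⟩ := hw
  rw [mulVec_add, mulVec_mulVec, Pi.add_apply, add_comm]
  exact add_le_add_right ((H * G).mulVec_apply_le_sum_abs hζ j) _

theorem mulVec_mulVec_le_of_nonneg_of_mul_eq {μ ν : Type*} [Fintype μ] [Fintype ν]
    {H : Matrix μ ν ℝ} {M : Matrix ν ν ℝ} {P : Matrix μ μ ℝ} (hP : ∀ i j, 0 ≤ P i j)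
    (hPH : P * H = H * M) {x : ν → ℝ} {h : μ → ℝ} (hx : H *ᵥ x ≤ h) :
    H *ᵥ (M *ᵥ x) ≤ P *ᵥ h := by
  rw [mulVec_mulVec, ← hPH, ← mulVec_mulVec]
  exact mulVec_le_mulVec_of_nonneg hP hx

theorem safe_control_polytope_general
    {n q sw nw : ℕ}
    (M : Matrix (Fin n) (Fin n) ℝ)
    (Gh : Matrix (Fin n) (Fin sw) ℝ) (ch : Fin n → ℝ)
    (Ah : Matrix (Fin nw) (Fin sw) ℝ) (bh : Fin nw → ℝ)
    (Hs : Matrix (Fin q) (Fin n) ℝ) (hs : Fin q → ℝ)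
    (lam : ℝ)
    (y : Fin q → ℝ) (hy : ∀ j, y j = ∑ i, |(Hs * Gh) j i|)
    (Pbar : Matrix (Fin q) (Fin q) ℝ)
    (hPnonneg : ∀ i j, 0 ≤ Pbar i j)
    (hPH : Pbar * Hs = Hs * M)
    (hPh : ∀ j, Pbar.mulVec hs j ≤ lam * hs j - Hs.mulVec ch j - y j) :
    ∀ x : Fin n → ℝ, (∀ j, Hs.mulVec x j ≤ hs j) →
      ∀ w ∈ constrainedZonotope Gh ch Ah bh,
        ∀ j, Hs.mulVec (M.mulVec x + w) j ≤ lam * hs j := by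
  intro x hx w hw j
  have hMx := mulVec_mulVec_le_of_nonneg_of_mul_eq hPnonneg hPH hx j
  have hw := mulVec_apply_le_of_mem_constrainedZonotope Hs hw j
  rw [mulVec_add, Pi.add_apply]
  linarith [hPh j, hy j]

/-- Polytopic safe set: if there is an entrywise nonnegative matrix `P̄` with
`P̄ H_s = H_s M` and `P̄ h_s ≤ λh_s − H_s c_h − y` (entrywise), where
`y_j = Σᵢ |H_{s,j} G_{h,i}|`, then for every `x` in the polytope `{x : H_s x ≤ h_s}`
and every disturbance `w` in the constrained zonotope `Z_w = C(G_h,c_h,A_h,b_h)`,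
the next state satisfies `H_s (Mx + w) ≤ λh_s`, i.e. the polytope is mapped into its
`λ`-scaled version under the closed-loop dynamics. -/
theorem safe_control_polytope
    {n q sw nw : ℕ}
    (M : Matrix (Fin n) (Fin n) ℝ)
    (Gh : Matrix (Fin n) (Fin sw) ℝ) (ch : Fin n → ℝ)
    (Ah : Matrix (Fin nw) (Fin sw) ℝ) (bh : Fin nw → ℝ)
    (Hs : Matrix (Fin q) (Fin n) ℝ) (hs : Fin q → ℝ)
    (lam : ℝ) (hlam : lam ∈ Set.Ioo (0 : ℝ) 1)
    (y : Fin q → ℝ) (hy : ∀ j, y j = ∑ i, |(Hs * Gh) j i|)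
    (Pbar : Matrix (Fin q) (Fin q) ℝ)
    (hPnonneg : ∀ i j, 0 ≤ Pbar i j)
    (hPH : Pbar * Hs = Hs * M)
    (hPh : ∀ j, Pbar.mulVec hs j ≤ lam * hs j - Hs.mulVec ch j - y j) :
    ∀ x : Fin n → ℝ, (∀ j, Hs.mulVec x j ≤ hs j) →
      ∀ w ∈ constrainedZonotope Gh ch Ah bh,
        ∀ j, Hs.mulVec (M.mulVec x + w) j ≤ lam * hs j :=
  safe_control_polytope_general M Gh ch Ah bh Hs hs lam y hy Pbar hPnonneg hPH hPh
end

section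
/- Let C1 = C(G1,c1,A1,b1) and C2 = C(G2,c2,A2,b2) be constrained zonotopes in ℝ^n with G_i ∈ ℝ^{n×s_i}, A_i ∈ ℝ^{q_i×s_i}, b_i ∈ ℝ^{q_i}, i = 1,2, and suppose there exist Γ ∈ ℝ^{s2×s1}, L ∈ ℝ^{s2} with c2 − c1 = G2 L, G1 = G2 Γ, and, for some P ∈ ℝ^{q2×q1}, P A1 = A2 Γ and P b1 = b2 + A2 L, together with the row condition Σ_k |Γ_{jk}| + |L_j| ≤ 1 for all j. Then for every ζ1 ∈ ℝ^{s1} with ‖ζ1‖_∞ ≤ 1 and A1 ζ1 = b1, the vector ζ2 = Γ ζ1 − L satisfies ‖ζ2‖_∞ ≤ 1, A2 ζ2 = b2, and G1 ζ1 + c1 = G2 ζ2 + c2. In particular, every element of C1 admits an explicit representation as an element of C2. -/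
/-! The coefficient map `ζ ↦ Γζ - L` sends the constraint set of the first constrained zonotope
into that of the second: each entry is bounded by the triangle inequality and the row condition,
and the two equalities are matrix algebra with `G₁ = G₂Γ` and `PA₁ = A₂Γ`. -/

open Matrix

section BoxBound

variable {m k R : Type*} [Fintype k] [Ring R] [LinearOrder R] [IsOrderedRing R]

theorem abs_mulVec_apply_le_sum_abs_s14 (M : Matrix m k R) {ζ : k → R} (hζ : ∀ i, |ζ i| ≤ 1)
    (j : m) : |(M *ᵥ ζ) j| ≤ ∑ i, |M j i| :=
  calc |(M *ᵥ ζ) j| = |∑ i, M j i * ζ i| := rfl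
    _ ≤ ∑ i, |M j i * ζ i| := Finset.abs_sum_le_sum_abs _ _
    _ ≤ ∑ i, |M j i| := Finset.sum_le_sum fun i _ => by
        rw [abs_mul]
        exact mul_le_of_le_one_right (abs_nonneg _) (hζ i)

theorem abs_mulVec_sub_apply_le_one_s14 (M : Matrix m k R) (L : m → R)
    (hrow : ∀ j, (∑ i, |M j i|) + |L j| ≤ 1) {ζ : k → R} (hζ : ∀ i, |ζ i| ≤ 1) (j : m) :
    |(M *ᵥ ζ - L) j| ≤ 1 :=
  calc |(M *ᵥ ζ - L) j| ≤ |(M *ᵥ ζ) j| + |L j| := abs_sub _ _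
    _ ≤ (∑ i, |M j i|) + |L j| := by gcongr; exact abs_mulVec_apply_le_sum_abs_s14 M hζ j
    _ ≤ 1 := hrow j

end BoxBound

section Affine

variable {m k l p R : Type*} [Fintype k] [Fintype l] [Fintype p] [CommRing R]

theorem mulVec_mulVec_sub_of_mul_eq {A₁ : Matrix p k R} {A₂ : Matrix m l R}
    {Γ : Matrix l k R} {P : Matrix m p R} (hA : P * A₁ = A₂ * Γ) (ζ : k → R) (L : l → R) :
    A₂ *ᵥ (Γ *ᵥ ζ - L) = P *ᵥ (A₁ *ᵥ ζ) - A₂ *ᵥ L := by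
  rw [mulVec_sub, mulVec_mulVec, mulVec_mulVec, hA]

theorem mulVec_add_eq_mulVec_mulVec_sub_add {G₁ : Matrix m k R} {G₂ : Matrix m l R}
    {Γ : Matrix l k R} {L : l → R} {c₁ c₂ : m → R} (hc : c₂ - c₁ = G₂ *ᵥ L)
    (hG : G₁ = G₂ * Γ) (ζ : k → R) :
    G₁ *ᵥ ζ + c₁ = G₂ *ᵥ (Γ *ᵥ ζ - L) + c₂ := by
  rw [mulVec_sub, mulVec_mulVec, ← hG, ← hc]
  abel

end Affine

/-- Explicit version of the constrained-zonotope inclusion lemma: under the `(Γ, L, P)`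
conditions relating `C(G₁,c₁,A₁,b₁)` and `C(G₂,c₂,A₂,b₂)`, every coefficient vector
`ζ₁` representing an element of the first constrained zonotope yields the coefficient
vector `ζ₂ = Γζ₁ − L` which represents the same point in the second constrained
zonotope: `‖ζ₂‖_∞ ≤ 1`, `A₂ζ₂ = b₂`, and `G₁ζ₁ + c₁ = G₂ζ₂ + c₂`. -/
theorem constrainedZonotope_inclusion_explicit
    {n s₁ s₂ q₁ q₂ : ℕ}
    (G₁ : Matrix (Fin n) (Fin s₁) ℝ) (c₁ : Fin n → ℝ)
    (A₁ : Matrix (Fin q₁) (Fin s₁) ℝ) (b₁ : Fin q₁ → ℝ)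
    (G₂ : Matrix (Fin n) (Fin s₂) ℝ) (c₂ : Fin n → ℝ)
    (A₂ : Matrix (Fin q₂) (Fin s₂) ℝ) (b₂ : Fin q₂ → ℝ)
    (Γ : Matrix (Fin s₂) (Fin s₁) ℝ) (L : Fin s₂ → ℝ) (P : Matrix (Fin q₂) (Fin q₁) ℝ)
    (hc : c₂ - c₁ = G₂.mulVec L)
    (hG : G₁ = G₂ * Γ)
    (hA : P * A₁ = A₂ * Γ)
    (hb : P.mulVec b₁ = b₂ + A₂.mulVec L)
    (hrow : ∀ j, (∑ k, |Γ j k|) + |L j| ≤ 1) :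
    ∀ ζ₁ : Fin s₁ → ℝ, (∀ i, |ζ₁ i| ≤ 1) → A₁.mulVec ζ₁ = b₁ →
      (∀ j, |(Γ.mulVec ζ₁ - L) j| ≤ 1) ∧
      A₂.mulVec (Γ.mulVec ζ₁ - L) = b₂ ∧
      G₁.mulVec ζ₁ + c₁ = G₂.mulVec (Γ.mulVec ζ₁ - L) + c₂ := by
  intro ζ₁ hζ₁ hAζ₁
  refine ⟨abs_mulVec_sub_apply_le_one_s14 Γ L hrow hζ₁,
    ?_, mulVec_add_eq_mulVec_mulVec_sub_add hc hG ζ₁⟩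
  rw [mulVec_mulVec_sub_of_mul_eq hA, hAζ₁, hb, add_sub_cancel_right]
end
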